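/- For every natural number k ≥ 1, there exist at least k distinct primitive Pythagorean triples (x, y, ℓ) with positive entries satisfying x, y, ℓ ≤ (2π²/3)·k; in particular, there exist k distinct primitive triples all of whose entries are at most 7k. -/

import Mathlib

/-!
Euclid's formula sends a coprime pair `(m, n)` of opposite parity to the primitive triple
`(m² - n², 2mn, m² + n²)`, with the legs swapped when `m < n`; this is injective, and every entry
is at most `m² + n²`. So it suffices to find `k` such pairs in a square `[1, M]²` with `2M² ≤ 7k`.
About `M² / 2` pairs there have odd sum. Those that are not coprime share an odd divisor `d ≥ 3`,
and for each `d` at most `(M / d)² / 2` of them do, so in all at most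
`M² / 2 · ∑_{d odd ≥ 3} 1 / d² ≤ M² / 8`. This leaves at least `3M² / 8 - 1 / 2` good pairs,
enough once `M ≥ 8`, i.e. `k ≥ 19`; smaller `k` are checked by computation.
-/

open Finset

namespace PrimitiveTriples

def oddSumPairs (t : ℕ) : Finset (ℕ × ℕ) := {p ∈ Ioc 0 t ×ˢ Ioc 0 t | Odd (p.1 + p.2)}

lemma mem_oddSumPairs {t : ℕ} {p : ℕ × ℕ} :
    p ∈ oddSumPairs t ↔ 0 < p.1 ∧ p.1 ≤ t ∧ 0 < p.2 ∧ p.2 ≤ t ∧ Odd (p.1 + p.2) := by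
  simp only [oddSumPairs, mem_filter, mem_product, mem_Ioc, and_assoc]

lemma card_filter_not_two_dvd_Ioc (t : ℕ) : #{x ∈ Ioc 0 t | ¬2 ∣ x} = (t + 1) / 2 := by
  have h := card_filter_add_card_filter_not (s := Ioc 0 t) (p := (2 ∣ ·))
  rw [Nat.Ioc_filter_dvd_card_eq_div, Nat.card_Ioc] at h
  omega

lemma card_oddSumPairs (t : ℕ) : #(oddSumPairs t) = 2 * (t / 2) * ((t + 1) / 2) := by
  set evens := {x ∈ Ioc 0 t | 2 ∣ x}
  set odds := {x ∈ Ioc 0 t | ¬2 ∣ x}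
  have hsplit : oddSumPairs t = evens ×ˢ odds ∪ odds ×ˢ evens := by
    ext p
    simp only [oddSumPairs, evens, odds, mem_union, mem_product, mem_filter, mem_Ioc, Nat.odd_iff]
    omega
  have hdisj : Disjoint (evens ×ˢ odds) (odds ×ˢ evens) :=
    disjoint_left.mpr fun p hp hp' => by
      simp only [evens, odds, mem_product, mem_filter] at hp hp'
      exact hp'.1.2 hp.1.2
  rw [hsplit, card_union_of_disjoint hdisj, card_product, card_product,
    Nat.Ioc_filter_dvd_card_eq_div, card_filter_not_two_dvd_Ioc]
  ring

lemma two_mul_card_oddSumPairs_add_mod_two (t : ℕ) : 2 * #(oddSumPairs t) + t % 2 = t ^ 2 := by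
  rw [card_oddSumPairs]
  rcases Nat.even_or_odd' t with ⟨u, rfl | rfl⟩
  · rw [show (2 * u + 1) / 2 = u by omega, Nat.mul_div_cancel_left u two_pos, Nat.mul_mod_right]
    ring
  · rw [show (2 * u + 1 + 1) / 2 = u + 1 by omega, show (2 * u + 1) / 2 = u by omega,
      show (2 * u + 1) % 2 = 1 by omega]
    ring

lemma card_filter_dvd_oddSumPairs_le (t d : ℕ) :
    #{p ∈ oddSumPairs t | d ∣ p.1 ∧ d ∣ p.2} ≤ #(oddSumPairs (t / d)) := by
  refine (card_le_card fun p hp => ?_).trans (card_image_le (f := fun q => (d * q.1, d * q.2)))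
  obtain ⟨p1, p2⟩ := p
  rw [mem_filter, mem_oddSumPairs] at hp
  obtain ⟨⟨hp1, hp1t, hp2, hp2t, hodd⟩, ⟨a, rfl⟩, ⟨b, rfl⟩⟩ := hp
  have hd : 0 < d := Nat.pos_of_mul_pos_right hp1
  rw [← mul_add] at hodd
  refine mem_image.mpr ⟨(a, b), mem_oddSumPairs.mpr ⟨Nat.pos_of_mul_pos_left hp1, ?_,
    Nat.pos_of_mul_pos_left hp2, ?_, Nat.Odd.of_mul_right hodd⟩, rfl⟩ <;>
  · rw [Nat.le_div_iff_mul_le hd]; linarith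

def coprimePairs (t : ℕ) : Finset (ℕ × ℕ) := {p ∈ oddSumPairs t | p.1.Coprime p.2}

lemma exists_odd_dvd_of_not_coprime {t : ℕ} {p : ℕ × ℕ} (hp : p ∈ oddSumPairs t)
    (hcop : ¬p.1.Coprime p.2) : ∃ j < t, 2 * j + 3 ∣ p.1 ∧ 2 * j + 3 ∣ p.2 := by
  obtain ⟨hp1, hp1t, -, -, hodd⟩ := mem_oddSumPairs.mp hp
  set g := p.1.gcd p.2
  have hg_odd : Odd g := hodd.of_dvd_nat (dvd_add (Nat.gcd_dvd_left _ _) (Nat.gcd_dvd_right _ _))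
  have hg_le : g ≤ t := (Nat.le_of_dvd hp1 (Nat.gcd_dvd_left _ _)).trans hp1t
  have hg_pos : 0 < g := Nat.gcd_pos_of_pos_left _ hp1
  obtain ⟨j, hj⟩ := hg_odd
  refine ⟨j - 1, by omega, ?_⟩
  rw [show 2 * (j - 1) + 3 = g by unfold Nat.Coprime at hcop; omega]
  exact ⟨Nat.gcd_dvd_left _ _, Nat.gcd_dvd_right _ _⟩

lemma card_oddSumPairs_le (t : ℕ) :
    #(oddSumPairs t) ≤ #(coprimePairs t) + ∑ j ∈ range t, #(oddSumPairs (t / (2 * j + 3))) := by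
  have hbad : {p ∈ oddSumPairs t | ¬p.1.Coprime p.2} ⊆
      (range t).biUnion fun j => {p ∈ oddSumPairs t | 2 * j + 3 ∣ p.1 ∧ 2 * j + 3 ∣ p.2} := by
    intro p hp
    rw [mem_filter] at hp
    obtain ⟨j, hj, hdvd⟩ := exists_odd_dvd_of_not_coprime hp.1 hp.2
    exact mem_biUnion.mpr ⟨j, mem_range.mpr hj, mem_filter.mpr ⟨hp.1, hdvd⟩⟩
  calc #(oddSumPairs t)
      = #(coprimePairs t) + #{p ∈ oddSumPairs t | ¬p.1.Coprime p.2} :=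
        (card_filter_add_card_filter_not _).symm
    _ ≤ #(coprimePairs t) + ∑ j ∈ range t, #(oddSumPairs (t / (2 * j + 3))) := by
      gcongr
      exact (card_le_card hbad).trans <| card_biUnion_le.trans <|
        sum_le_sum fun j _ => card_filter_dvd_oddSumPairs_le t _

lemma four_mul_sum_sq_div_le (t n : ℕ) : 4 * ∑ j ∈ range n, (t / (2 * j + 3)) ^ 2 ≤ t ^ 2 := by
  -- `1 / (2j + 3)² ≤ 1 / ((2j + 2)(2j + 4))`, which telescopes
  let f (j : ℕ) : ℚ := 1 / (j + 1)
  have hterm (j : ℕ) : (((t / (2 * j + 3)) ^ 2 : ℕ) : ℚ) ≤ t ^ 2 / 4 * (f j - f (j + 1)) := by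
    have hdiv : ((t / (2 * j + 3) : ℕ) : ℚ) * (2 * j + 3) ≤ t := by
      exact_mod_cast Nat.div_mul_le_self t (2 * j + 3)
    have hf : f j - f (j + 1) = 1 / ((j + 1) * (j + 2)) := by
      simp only [f]; push_cast; field_simp; ring
    rw [hf, mul_one_div, le_div_iff₀ (by positivity)]
    push_cast
    nlinarith [mul_le_mul hdiv hdiv (by positivity) (Nat.cast_nonneg t)]
  have hsum : ((∑ j ∈ range n, (t / (2 * j + 3)) ^ 2 : ℕ) : ℚ) ≤ t ^ 2 / 4 :=
    calc _ ≤ ∑ j ∈ range n, (t : ℚ) ^ 2 / 4 * (f j - f (j + 1)) := by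
          rw [Nat.cast_sum]; exact sum_le_sum fun j _ => hterm j
      _ = t ^ 2 / 4 * (f 0 - f n) := by rw [← mul_sum, sum_range_sub']
      _ ≤ t ^ 2 / 4 * f 0 := by gcongr; exact sub_le_self _ (by positivity)
      _ = t ^ 2 / 4 := by simp [f]
  have : ((4 * ∑ j ∈ range n, (t / (2 * j + 3)) ^ 2 : ℕ) : ℚ) ≤ ((t ^ 2 : ℕ) : ℚ) := by
    push_cast at hsum ⊢; linarith
  exact_mod_cast this

lemma sq_le_card_coprimePairs (t : ℕ) : 3 * t ^ 2 ≤ 8 * #(coprimePairs t) + 4 := by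
  have hsieve := card_oddSumPairs_le t
  have hsum : 8 * ∑ j ∈ range t, #(oddSumPairs (t / (2 * j + 3))) ≤ t ^ 2 := by
    calc _ = 4 * ∑ j ∈ range t, 2 * #(oddSumPairs (t / (2 * j + 3))) := by rw [← mul_sum]; ring
      _ ≤ 4 * ∑ j ∈ range t, (t / (2 * j + 3)) ^ 2 := by
        gcongr with j
        have := two_mul_card_oddSumPairs_add_mod_two (t / (2 * j + 3))
        omega
      _ ≤ t ^ 2 := four_mul_sum_sq_div_le t t
  have := two_mul_card_oddSumPairs_add_mod_two t
  have := Nat.mod_lt t two_pos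
  omega

def euclidPairs (N : ℕ) : Finset (ℕ × ℕ) := {p ∈ coprimePairs N | p.1 ^ 2 + p.2 ^ 2 ≤ N}

lemma euclidPairs_subset_oddSumPairs (N : ℕ) : euclidPairs N ⊆ oddSumPairs N :=
  (filter_subset _ _).trans (filter_subset _ _)

lemma filter_coprimePairs_subset_euclidPairs (t N : ℕ) :
    {p ∈ coprimePairs t | p.1 ^ 2 + p.2 ^ 2 ≤ N} ⊆ euclidPairs N := by
  intro p hp
  simp only [euclidPairs, coprimePairs, mem_filter, mem_oddSumPairs] at hp ⊢
  obtain ⟨⟨⟨hm, -, hn, -, hodd⟩, hcop⟩, hN⟩ := hp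
  refine ⟨⟨⟨hm, ?_, hn, ?_, hodd⟩, hcop⟩, hN⟩ <;> nlinarith

lemma odd_sq_add_sq {m n : ℕ} (h : Odd (m + n)) : Odd (m ^ 2 + n ^ 2) := by
  simpa [Nat.odd_add, Nat.even_pow, Nat.odd_pow_iff] using h

lemma euclid_sq_add_sq {m n : ℕ} (h : n ≤ m) :
    (m ^ 2 - n ^ 2) ^ 2 + (2 * (m * n)) ^ 2 = (m ^ 2 + n ^ 2) ^ 2 := by
  have := Nat.pow_le_pow_left h 2
  zify [this]
  ring

lemma coprime_sq_sub_sq_sq_add_sq {m n : ℕ} (h : n ≤ m) (hodd : Odd (m + n))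
    (hcop : m.Coprime n) : (m ^ 2 - n ^ 2).Coprime (m ^ 2 + n ^ 2) := by
  have hle := Nat.pow_le_pow_left h 2
  set g := (m ^ 2 - n ^ 2).gcd (m ^ 2 + n ^ 2)
  have hx : g ∣ m ^ 2 - n ^ 2 := Nat.gcd_dvd_left _ _
  have hz : g ∣ m ^ 2 + n ^ 2 := Nat.gcd_dvd_right _ _
  have hm : g ∣ 2 * m ^ 2 := by
    rw [show 2 * m ^ 2 = (m ^ 2 - n ^ 2) + (m ^ 2 + n ^ 2) by omega]; exact dvd_add hx hz
  have hn : g ∣ 2 * n ^ 2 := by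
    rw [show 2 * n ^ 2 = (m ^ 2 + n ^ 2) - (m ^ 2 - n ^ 2) by omega]; exact Nat.dvd_sub hz hx
  have h2 : g ∣ 2 := by
    simpa [Nat.gcd_mul_left, (hcop.pow 2 2).gcd_eq_one] using Nat.dvd_gcd hm hn
  have hg_odd : Odd g := (odd_sq_add_sq hodd).of_dvd_nat hz
  rcases (Nat.dvd_prime Nat.prime_two).mp h2 with h1 | h1
  · exact h1
  · exact absurd (h1 ▸ hg_odd) (by decide)

def euclidTriple (p : ℕ × ℕ) : ℕ × ℕ × ℕ :=
  if p.2 < p.1 then (p.1 ^ 2 - p.2 ^ 2, 2 * (p.1 * p.2), p.1 ^ 2 + p.2 ^ 2)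
  else (2 * (p.1 * p.2), p.2 ^ 2 - p.1 ^ 2, p.1 ^ 2 + p.2 ^ 2)

lemma euclidTriple_injOn : Set.InjOn euclidTriple {p | Odd (p.1 + p.2)} := by
  rintro ⟨m, n⟩ hmn ⟨m', n'⟩ hmn' heq
  have hz : (m ^ 2 + n ^ 2) % 2 = 1 := Nat.odd_iff.mp (odd_sq_add_sq hmn)
  have hz' : (m' ^ 2 + n' ^ 2) % 2 = 1 := Nat.odd_iff.mp (odd_sq_add_sq hmn')
  have sq_inj := Nat.pow_left_injective (n := 2) two_ne_zero
  simp only [euclidTriple] at heq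
  split_ifs at heq with h h' h' <;> simp only [Prod.mk.injEq] at heq
  · have := Nat.pow_le_pow_left h.le 2
    have := Nat.pow_le_pow_left h'.le 2
    exact Prod.ext (sq_inj (by dsimp only; omega)) (sq_inj (by dsimp only; omega))
  · have := Nat.pow_le_pow_left h.le 2
    omega
  · have := Nat.pow_le_pow_left h'.le 2
    omega
  · have := Nat.pow_le_pow_left (not_lt.mp h) 2
    have := Nat.pow_le_pow_left (not_lt.mp h') 2
    exact Prod.ext (sq_inj (by dsimp only; omega)) (sq_inj (by dsimp only; omega))

def IsPrimitivePythagorean (x : ℕ × ℕ × ℕ) : Prop :=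
  0 < x.1 ∧ 0 < x.2.1 ∧ 0 < x.2.2 ∧ x.1 ^ 2 + x.2.1 ^ 2 = x.2.2 ^ 2 ∧
    x.1.gcd (x.2.1.gcd x.2.2) = 1

lemma IsPrimitivePythagorean.swap {a b c : ℕ} (h : IsPrimitivePythagorean (a, b, c)) :
    IsPrimitivePythagorean (b, a, c) := by
  obtain ⟨ha, hb, hc, hpyth, hgcd⟩ := h
  exact ⟨hb, ha, hc, by rw [← hpyth, add_comm], by rw [Nat.gcd_left_comm]; exact hgcd⟩

lemma isPrimitivePythagorean_euclid {m n : ℕ} (hn : 0 < n) (h : n < m) (hodd : Odd (m + n))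
    (hcop : m.Coprime n) : IsPrimitivePythagorean (m ^ 2 - n ^ 2, 2 * (m * n), m ^ 2 + n ^ 2) := by
  have := Nat.pow_lt_pow_left h two_ne_zero
  have hm : 0 < m := hn.trans h
  refine ⟨by omega, by positivity, by positivity, euclid_sq_add_sq h.le, ?_⟩
  exact (coprime_sq_sub_sq_sq_add_sq h.le hodd hcop).coprime_dvd_right (Nat.gcd_dvd_right _ _)

lemma isPrimitivePythagorean_euclidTriple {t : ℕ} {p : ℕ × ℕ} (hp : p ∈ coprimePairs t) :
    IsPrimitivePythagorean (euclidTriple p) := by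
  obtain ⟨m, n⟩ := p
  rw [coprimePairs, mem_filter, mem_oddSumPairs] at hp
  obtain ⟨⟨hm, -, hn, -, hodd⟩, hcop⟩ := hp
  have hne : m ≠ n := by rintro rfl; exact Nat.not_even_iff_odd.mpr hodd ⟨m, rfl⟩
  simp only [euclidTriple]
  split_ifs with h
  · exact isPrimitivePythagorean_euclid hn h hodd hcop
  · rw [mul_comm m, add_comm (m ^ 2)]
    exact (isPrimitivePythagorean_euclid hm (by omega) (by rwa [add_comm]) hcop.symm).swap

lemma euclidTriple_le_of_mem_euclidPairs {N : ℕ} {p : ℕ × ℕ} (hp : p ∈ euclidPairs N) :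
    (euclidTriple p).1 ≤ N ∧ (euclidTriple p).2.1 ≤ N ∧ (euclidTriple p).2.2 ≤ N := by
  have hN := (mem_filter.mp hp).2
  have h2mn : 2 * (p.1 * p.2) ≤ p.1 ^ 2 + p.2 ^ 2 := by
    rw [← mul_assoc]; exact two_mul_le_add_sq _ _
  simp only [euclidTriple]
  split_ifs <;> dsimp only <;> refine ⟨?_, ?_, ?_⟩ <;> omega

lemma le_card_euclidPairs (k : ℕ) : k ≤ #(euclidPairs (7 * k)) := by
  rcases lt_or_ge k 19 with hk | hk
  · calc k ≤ #{p ∈ coprimePairs 11 | p.1 ^ 2 + p.2 ^ 2 ≤ 7 * k} := by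
          revert k; decide
      _ ≤ #(euclidPairs (7 * k)) := card_le_card (filter_coprimePairs_subset_euclidPairs _ _)
  · set M := Nat.sqrt (7 * k / 2)
    have hM : 8 ≤ M := Nat.le_sqrt.mpr (by omega)
    have hMk : 2 * M ^ 2 ≤ 7 * k := by
      have : M ^ 2 ≤ 7 * k / 2 := Nat.sqrt_le' _
      omega
    have hkM : 7 * k < 2 * (M + 1) ^ 2 := by
      have : 7 * k / 2 < (M + 1) ^ 2 := Nat.lt_succ_sqrt' _
      omega
    have hfilter : {p ∈ coprimePairs M | p.1 ^ 2 + p.2 ^ 2 ≤ 7 * k} = coprimePairs M := by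
      refine filter_true_of_mem fun p hp => ?_
      obtain ⟨-, hm, -, hn, -⟩ := mem_oddSumPairs.mp (mem_filter.mp hp).1
      nlinarith
    calc k ≤ #(coprimePairs M) := by nlinarith [sq_le_card_coprimePairs M]
      _ ≤ #(euclidPairs (7 * k)) := by
        rw [← hfilter]; exact card_le_card (filter_coprimePairs_subset_euclidPairs _ _)

end PrimitiveTriples

theorem primitive_triples_linear_bound_general (k : ℕ) :
    ∃ S : Finset (ℕ × ℕ × ℕ), k ≤ S.card ∧
      ∀ t ∈ S, 0 < t.1 ∧ 0 < t.2.1 ∧ 0 < t.2.2 ∧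
        t.1 ^ 2 + t.2.1 ^ 2 = t.2.2 ^ 2 ∧
        Nat.gcd t.1 (Nat.gcd t.2.1 t.2.2) = 1 ∧
        t.1 ≤ 7 * k ∧ t.2.1 ≤ 7 * k ∧ t.2.2 ≤ 7 * k := by
  open PrimitiveTriples in
  refine ⟨(euclidPairs (7 * k)).image euclidTriple, ?_, ?_⟩
  · rw [card_image_of_injOn (euclidTriple_injOn.mono fun p hp => ?_)]
    · exact le_card_euclidPairs k
    · exact (mem_oddSumPairs.mp (euclidPairs_subset_oddSumPairs _ hp)).2.2.2.2
  · simp only [mem_image]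
    rintro _ ⟨p, hp, rfl⟩
    obtain ⟨hx, hy, hz, hpyth, hgcd⟩ := isPrimitivePythagorean_euclidTriple (mem_filter.mp hp).1
    exact ⟨hx, hy, hz, hpyth, hgcd, euclidTriple_le_of_mem_euclidPairs hp⟩

/-- For every `k ≥ 1`, there are at least `k` distinct primitive Pythagorean triples
all of whose entries are at most `7k`. -/
theorem primitive_triples_linear_bound (k : ℕ) (hk : 1 ≤ k) :
    ∃ S : Finset (ℕ × ℕ × ℕ), k ≤ S.card ∧
      ∀ t ∈ S, 0 < t.1 ∧ 0 < t.2.1 ∧ 0 < t.2.2 ∧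
        t.1 ^ 2 + t.2.1 ^ 2 = t.2.2 ^ 2 ∧
        Nat.gcd t.1 (Nat.gcd t.2.1 t.2.2) = 1 ∧
        t.1 ≤ 7 * k ∧ t.2.1 ≤ 7 * k ∧ t.2.2 ≤ 7 * k :=
  primitive_triples_linear_bound_general k
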